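/- arXiv:nlin/0410049 — 10 statements merged into one kernel-verified Lean document; each statement's English description precedes it below -/
import Mathlib

section
/- Let K be a differential field with derivation D and subfield of constants C. Let q, m ≥ 1, let f_1, …, f_m ∈ K^q be linearly independent over C, and let g_1, …, g_m ∈ K^q. Then the q×q matrix Σ_{α=1}^m g_α ⊗ D^j(f_α) (whose (k,d)-entry is Σ_{α=1}^m (g_α)_k · D^j((f_α)_d)) vanishes for every integer j ≥ 0 if and only if g_α = 0 for all α = 1, …, m. (This is the coefficient form of the statement that the weakly nonlocal operator Σ_α f_α ⊗ D^{−1} ∘ g_α is zero if and only if all g_α vanish.) -/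
/-- Let `K` be a differential field with derivation `D` and subfield of
constants `C`. Let `q, m ≥ 1`, let `f_1, …, f_m ∈ K^q` be linearly independent over the
constants, and let `g_1, …, g_m ∈ K^q`. Then the `q×q` matrix
`Σ_α g_α ⊗ D^j(f_α)` (with `(k,d)`-entry `Σ_α (g_α)_k · D^j((f_α)_d)`) vanishes for every
`j ≥ 0` if and only if `g_α = 0` for all `α`. -/
theorem stmt_0 {K : Type*} [Field K] (D : K → K)
    (hadd : ∀ a b : K, D (a + b) = D a + D b)
    (hleib : ∀ a b : K, D (a * b) = a * D b + b * D a)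
    (q m : ℕ) (hq : 1 ≤ q) (hm : 1 ≤ m)
    (f g : Fin m → Fin q → K)
    (hindep : ∀ c : Fin m → K, (∀ α, D (c α) = 0) →
      (∑ α, c α • f α) = 0 → ∀ α, c α = 0) :
    (∀ (j : ℕ) (k d : Fin q), ∑ α, g α k * D^[j] (f α d) = 0) ↔
      (∀ α, g α = 0) := by
  classical
  have hD0 : D 0 = 0 := by simpa using hadd 0 0
  have hD1 : D 1 = 0 := by
    have h := hleib 1 1
    simp only [one_mul, mul_one] at h
    exact left_eq_add.mp h
  let Dh : K →+ K := AddMonoidHom.mk' D hadd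
  constructor
  · intro h
    suffices H : ∀ n (c : Fin m → K),
        (Finset.univ.filter (fun α => c α ≠ 0)).card ≤ n →
        (∀ (j : ℕ) (d : Fin q), ∑ α, c α * D^[j] (f α d) = 0) →
        ∀ α, c α = 0 by
      intro α
      funext k
      exact H m (fun α => g α k)
        (le_trans (Finset.card_le_card (Finset.filter_subset _ _)) (by simp))
        (fun j d => h j k d) α
    intro n
    induction n with
    | zero =>
      intro c hc _ α
      by_contra hne
      have hmem : α ∈ Finset.univ.filter (fun α => c α ≠ 0) := by simp [hne]
      have := Finset.card_pos.mpr ⟨α, hmem⟩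
      omega
    | succ n ih =>
      intro c hc hrel
      by_contra hne
      push_neg at hne
      obtain ⟨α₀, hα₀⟩ := hne
      set c' : Fin m → K := fun α => c α / c α₀ with hc'def
      have hc'α₀ : c' α₀ = 1 := div_self hα₀
      have hc'rel : ∀ (j : ℕ) (d : Fin q), ∑ α, c' α * D^[j] (f α d) = 0 := by
        intro j d
        have h1 : ∑ α, c' α * D^[j] (f α d)
            = (∑ α, c α * D^[j] (f α d)) / c α₀ := by
          rw [Finset.sum_div]
          exact Finset.sum_congr rfl (fun α _ => by
            simp [hc'def, div_mul_eq_mul_div])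
        rw [h1, hrel j d, zero_div]
      set e : Fin m → K := fun α => D (c' α) with hedef
      have heα₀ : e α₀ = 0 := by simp [hedef, hc'α₀, hD1]
      have herel : ∀ (j : ℕ) (d : Fin q), ∑ α, e α * D^[j] (f α d) = 0 := by
        intro j d
        have h0 : Dh (∑ α, c' α * D^[j] (f α d)) = 0 := by
          rw [hc'rel j d]; exact hD0
        rw [map_sum] at h0
        have h1 : ∀ α ∈ Finset.univ, Dh (c' α * D^[j] (f α d))
            = c' α * D^[j+1] (f α d) + e α * D^[j] (f α d) := by
          intro α _
          show D (c' α * D^[j] (f α d)) = _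
          rw [hleib, Function.iterate_succ_apply' D j]
          ring
        rw [Finset.sum_congr rfl h1, Finset.sum_add_distrib, hc'rel (j+1) d,
          zero_add] at h0
        exact h0
      have hcard : (Finset.univ.filter (fun α => e α ≠ 0)).card ≤ n := by
        have hsub : Finset.univ.filter (fun α => e α ≠ 0)
            ⊆ (Finset.univ.filter (fun α => c α ≠ 0)).erase α₀ := by
          intro α hα
          simp only [Finset.mem_filter, Finset.mem_univ, true_and] at hα
          rw [Finset.mem_erase]
          constructor
          · rintro rfl; exact hα heα₀
          · simp only [Finset.mem_filter, Finset.mem_univ, true_and]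
            intro hc0
            apply hα
            simp [hedef, hc'def, hc0, hD0]
        have := Finset.card_le_card hsub
        have hα₀mem : α₀ ∈ Finset.univ.filter (fun α => c α ≠ 0) := by simp [hα₀]
        have := Finset.card_erase_of_mem hα₀mem
        omega
      have he0 : ∀ α, e α = 0 := ih e hcard herel
      have hsum : (∑ α, c' α • f α) = 0 := by
        funext d
        have := hc'rel 0 d
        simpa using this
      have := hindep c' he0 hsum α₀
      rw [hc'α₀] at this
      exact one_ne_zero this
  · intro h j k d
    simp [h]
end

section
/- Let K be a differential field with derivation D and subfield of constants C. Let q, m ≥ 1, let f_1, …, f_m ∈ K^q be linearly independent over C, and let g_1, …, g_m ∈ K. If Σ_{α=1}^m g_α · D^j(f_α) = 0 in K^q for every integer j ≥ 0, then g_1 = g_2 = … = g_m = 0. -/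
/-!
Induction on the number of nonzero `g_α`. If some `g_β ≠ 0`, rescale so that `g_β = 1`.
Differentiating the relation of order `j` and subtracting the one of order `j + 1` shows that
`(D g_α)_α` satisfies the same relations, with `D g_β = 0`; by induction all `g_α` are
constants, and the relation of order `0` contradicts the independence of the `f_α`.
-/

open Finset

section

variable {R K ι κ : Type*} [CommRing R] [Field K] [Algebra R K] [Fintype ι]

def AnnihilatesIterates (D : Derivation R K K) (f : ι → κ → K) (g : ι → K) : Prop :=
  ∀ (j : ℕ) (d : κ), ∑ α, g α * (⇑D)^[j] (f α d) = 0

variable {D : Derivation R K K} {f : ι → κ → K} {g : ι → K}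

theorem AnnihilatesIterates.const_mul (hg : AnnihilatesIterates D f g) (c : K) :
    AnnihilatesIterates D f (fun α => c * g α) := by
  intro j d
  simp only [mul_assoc, ← mul_sum, hg j d, mul_zero]

theorem AnnihilatesIterates.derivation (hg : AnnihilatesIterates D f g) :
    AnnihilatesIterates D f (fun α => D (g α)) := by
  intro j d
  have hderiv := congrArg D (hg j d)
  simp only [map_sum, Derivation.leibniz, smul_eq_mul, map_zero, sum_add_distrib] at hderiv
  simpa only [← Function.iterate_succ_apply' D, hg (j + 1) d, zero_add, mul_comm] using hderiv

theorem AnnihilatesIterates.eq_zero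
    (hf : ∀ c : ι → K, (∀ α, D (c α) = 0) → ∑ α, c α • f α = 0 → ∀ α, c α = 0)
    (hg : AnnihilatesIterates D f g) : g = 0 := by
  classical
  induction hs : univ.filter (g · ≠ 0) using Finset.strongInduction generalizing g with
  | H s ih =>
  by_contra hne
  obtain ⟨β, hβ⟩ := Function.ne_iff.mp hne
  set G : ι → K := fun α => (g β)⁻¹ * g α
  have hGβ : G β = 1 := inv_mul_cancel₀ hβ
  have hG : AnnihilatesIterates D f G := hg.const_mul _
  have hsupp : univ.filter (fun α => D (G α) ≠ 0) ⊂ s := by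
    rw [← hs, ssubset_iff_of_subset]
    · exact ⟨β, by simpa using hβ, by simp [hGβ]⟩
    · intro α hα
      simp only [mem_filter, mem_univ, true_and] at hα ⊢
      intro hgα
      simp [G, hgα] at hα
  have hconst : (fun α => D (G α)) = 0 := ih _ hsupp hG.derivation rfl
  have hrel : ∑ α, G α • f α = 0 := by
    funext d
    simpa using hG 0 d
  simpa [hGβ] using hf G (congrFun hconst) hrel β

end

theorem stmt_1_general {K : Type*} [Field K] (D : K → K)
    (hadd : ∀ a b : K, D (a + b) = D a + D b)
    (hleib : ∀ a b : K, D (a * b) = a * D b + b * D a)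
    (q m : ℕ)
    (f : Fin m → Fin q → K) (g : Fin m → K)
    (hindep : ∀ c : Fin m → K, (∀ α, D (c α) = 0) →
      (∑ α, c α • f α) = 0 → ∀ α, c α = 0)
    (h : ∀ (j : ℕ) (d : Fin q), ∑ α, g α * D^[j] (f α d) = 0) :
    ∀ α, g α = 0 := by
  let D' : Derivation ℤ K K := .mk' (AddMonoidHom.mk' D hadd).toIntLinearMap hleib
  have hD' : AnnihilatesIterates D' f g := h
  exact congrFun (hD'.eq_zero hindep)

/-- Let `K` be a differential field with derivation `D` and subfield of
constants `C`. Let `q, m ≥ 1`, let `f_1, …, f_m ∈ K^q` be linearly independent over the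
constants, and let `g_1, …, g_m ∈ K`. If `Σ_α g_α · D^j(f_α) = 0` in `K^q` for every
`j ≥ 0`, then `g_1 = … = g_m = 0`. -/
theorem stmt_1 {K : Type*} [Field K] (D : K → K)
    (hadd : ∀ a b : K, D (a + b) = D a + D b)
    (hleib : ∀ a b : K, D (a * b) = a * D b + b * D a)
    (q m : ℕ) (hq : 1 ≤ q) (hm : 1 ≤ m)
    (f : Fin m → Fin q → K) (g : Fin m → K)
    (hindep : ∀ c : Fin m → K, (∀ α, D (c α) = 0) →
      (∑ α, c α • f α) = 0 → ∀ α, c α = 0)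
    (h : ∀ (j : ℕ) (d : Fin q), ∑ α, g α * D^[j] (f α d) = 0) :
    ∀ α, g α = 0 :=
  stmt_1_general D hadd hleib q m f g hindep h
end

section
/- Let K be a differential field with derivation D and subfield of constants C, and let f_1, …, f_m ∈ K^q. If there exist h_1, …, h_m ∈ K, not all zero, such that Σ_{α=1}^m h_α · D^j(f_α) = 0 in K^q for every integer j ≥ 0, then f_1, …, f_m are linearly dependent over C. -/
/-- Let `K` be a differential field with derivation `D` and subfield of
constants `C`, and let `f_1, …, f_m ∈ K^q`. If there exist `h_1, …, h_m ∈ K`, not all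
zero, such that `Σ_α h_α · D^j(f_α) = 0` in `K^q` for every `j ≥ 0`, then
`f_1, …, f_m` are linearly dependent over the constants. -/
theorem stmt_2 {K : Type*} [Field K] (D : K → K)
    (hadd : ∀ a b : K, D (a + b) = D a + D b)
    (hleib : ∀ a b : K, D (a * b) = a * D b + b * D a)
    (q m : ℕ) (f : Fin m → Fin q → K)
    (h : Fin m → K) (hne : ∃ α, h α ≠ 0)
    (hrel : ∀ (j : ℕ) (d : Fin q), ∑ α, h α * D^[j] (f α d) = 0) :
    ∃ c : Fin m → K, (∀ α, D (c α) = 0) ∧ (∃ α, c α ≠ 0) ∧ ∑ α, c α • f α = 0 := by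
  classical
  have hD0 : D 0 = 0 := by
    have := hadd 0 0
    simp only [add_zero] at this
    linear_combination -this
  have hD1 : D 1 = 0 := by
    have := hleib 1 1
    simp only [mul_one, one_mul] at this
    linear_combination -this
  have hDsum : ∀ (F : Fin m → K), D (∑ α, F α) = ∑ α, D (F α) := by
    intro F
    let φ : K →+ K := ⟨⟨D, hD0⟩, hadd⟩
    exact map_sum φ F Finset.univ
  -- P: the relation property
  set P : (Fin m → K) → Prop := fun g =>
    (∃ α, g α ≠ 0) ∧ ∀ (j : ℕ) (d : Fin q), ∑ α, g α * D^[j] (f α d) = 0 with hPdef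
  have hex : ∃ n, ∃ g, P g ∧ (Finset.univ.filter fun α => g α ≠ 0).card = n :=
    ⟨_, h, ⟨hne, hrel⟩, rfl⟩
  obtain ⟨g, hPg, hcard⟩ := Nat.find_spec hex
  have hmin : ∀ g', P g' → Nat.find hex ≤ (Finset.univ.filter fun α => g' α ≠ 0).card :=
    fun g' hg' => Nat.find_le ⟨g', hg', rfl⟩
  obtain ⟨α0, hα0⟩ := hPg.1
  -- normalize
  set c : Fin m → K := fun α => (g α0)⁻¹ * g α with hcdef
  have hc0 : c α0 = 1 := inv_mul_cancel₀ hα0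
  have hcsupp : ∀ α, c α ≠ 0 ↔ g α ≠ 0 := by
    intro α
    simp only [hcdef, ne_eq, mul_eq_zero, inv_eq_zero, not_or]
    constructor
    · exact fun hx => hx.2
    · exact fun hx => ⟨hα0, hx⟩
  have hPc : P c := by
    refine ⟨⟨α0, by rw [hc0]; exact one_ne_zero⟩, fun j d => ?_⟩
    have := hPg.2 j d
    calc ∑ α, c α * D^[j] (f α d) = (g α0)⁻¹ * ∑ α, g α * D^[j] (f α d) := by
          rw [Finset.mul_sum]; congr 1; funext α; ring
      _ = 0 := by rw [this, mul_zero]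
  -- differentiated relation
  have hDrel : ∀ (j : ℕ) (d : Fin q), ∑ α, D (c α) * D^[j] (f α d) = 0 := by
    intro j d
    have h1 : D (∑ α, c α * D^[j] (f α d)) = 0 := by rw [hPc.2 j d, hD0]
    rw [hDsum] at h1
    have h2 : ∀ α : Fin m, D (c α * D^[j] (f α d))
        = c α * D^[j+1] (f α d) + D^[j] (f α d) * D (c α) := by
      intro α
      rw [hleib, Function.iterate_succ_apply']
    rw [Finset.sum_congr rfl (fun α _ => h2 α), Finset.sum_add_distrib,
      hPc.2 (j+1) d, zero_add] at h1
    rw [← h1]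
    congr 1; funext α; ring
  -- all D (c α) = 0 by minimality
  have hconst : ∀ α, D (c α) = 0 := by
    by_contra hcon
    push_neg at hcon
    obtain ⟨β, hβ⟩ := hcon
    have hPD : P (fun α => D (c α)) := ⟨⟨β, hβ⟩, hDrel⟩
    have hsub : (Finset.univ.filter fun α => D (c α) ≠ 0)
        ⊆ (Finset.univ.filter fun α => c α ≠ 0).erase α0 := by
      intro α hα
      simp only [Finset.mem_filter, Finset.mem_univ, true_and] at hα
      refine Finset.mem_erase.2 ⟨?_, ?_⟩
      · rintro rfl
        rw [hc0, hD1] at hα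
        exact hα rfl
      · simp only [Finset.mem_filter, Finset.mem_univ, true_and]
        intro hz
        rw [hz, hD0] at hα
        exact hα rfl
    have hmem : α0 ∈ (Finset.univ.filter fun α => c α ≠ 0) := by
      simp only [Finset.mem_filter, Finset.mem_univ, true_and, hc0]
      exact one_ne_zero
    have hlt : (Finset.univ.filter fun α => D (c α) ≠ 0).card
        < (Finset.univ.filter fun α => c α ≠ 0).card :=
      lt_of_le_of_lt (Finset.card_le_card hsub)
        (Finset.card_erase_lt_of_mem hmem)
    have hceq : (Finset.univ.filter fun α => c α ≠ 0).card = Nat.find hex := by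
      rw [← hcard]
      congr 1
      apply Finset.filter_congr
      intro α _
      simp [hcsupp α]
    rw [hceq] at hlt
    exact absurd (hmin _ hPD) (not_le.2 hlt)
  refine ⟨c, hconst, ⟨α0, by rw [hc0]; exact one_ne_zero⟩, ?_⟩
  funext d
  have := hPc.2 0 d
  simp only [Function.iterate_zero, id_eq] at this
  simpa [Finset.sum_apply] using this
end

section
/- Let A be a commutative ring, D : A → A a derivation, s ≥ 1, r ≥ 0, p ≥ 0. Let a_0, …, a_r be s×s matrices over A, let G_1, …, G_p, γ_1, …, γ_p, Q, γ ∈ A^s, and let f_1, …, f_p, g_1, …, g_p ∈ A satisfy D(f_β) = γ_β·Q and D(g_β) = G_β·γ for β = 1, …, p. Set R(Q) := Σ_{i=0}^r a_i·D^i(Q) + Σ_{β=1}^p f_β·G_β ∈ A^s and R†(γ) := Σ_{i=0}^r (−1)^i D^i(a_iᵀ·γ) − Σ_{β=1}^p g_β·γ_β ∈ A^s. Then R(Q)·γ − Q·R†(γ) = D( Σ_{i=1}^r Σ_{j=0}^{i−1} ((−1)^j D^j(a_iᵀ·γ)) · D^{i−j−1}(Q) + Σ_{β=1}^p g_β·f_β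 ). (This is the key identity expressing that, for a weakly nonlocal operator R = Σ_i a_i D^i + Σ_β G_β ⊗ D^{−1}∘γ_β, the element R(Q)·γ − Q·R†(γ) is a total derivative with an explicit antiderivative.) -/
/-!
Each local term pairs with its formal adjoint up to a total derivative, by iterated integration
by parts: `u · Dⁱ v - (-1)ⁱ Dⁱ u · v = D (∑_{j<i} (-1)ʲ Dʲ u · D^{i-j-1} v)`, applied to
`u = (aᵢᵀ γ)_k`, `v = Q_k`. Each nonlocal term contributes `f_β D g_β + g_β D f_β = D (g_β f_β)`.
-/

open Finset

def Derivation.ofLeibniz {A : Type*} [CommRing A] (D : A → A)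
    (hadd : ∀ a b : A, D (a + b) = D a + D b)
    (hleib : ∀ a b : A, D (a * b) = a * D b + b * D a) : Derivation ℤ A A :=
  Derivation.mk' (AddMonoidHom.mk' D hadd).toIntLinearMap fun a b => hleib a b

namespace Derivation

variable {R A : Type*} [CommSemiring R] [CommRing A] [Algebra R A] (δ : Derivation R A A)

theorem map_neg_one_pow_mul (j : ℕ) (w : A) : δ ((-1) ^ j * w) = (-1) ^ j * δ w := by
  simp [leibniz, leibniz_pow]

theorem mul_iterate_sub_neg_one_pow_iterate_mul (i : ℕ) (u v : A) :
    u * δ^[i] v - (-1) ^ i * δ^[i] u * v =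
      δ (∑ j ∈ range i, (-1) ^ j * δ^[j] u * δ^[i - j - 1] v) := by
  induction i generalizing v with
  | zero => simp
  | succ i ih =>
    have hshift : ∀ j ∈ range i, (-1) ^ j * δ^[j] u * δ^[i + 1 - j - 1] v
        = (-1) ^ j * δ^[j] u * δ^[i - j - 1] (δ v) := fun j hj => by
      rw [← Function.iterate_succ_apply, show i + 1 - j - 1 = i - j - 1 + 1 by
        have := mem_range.mp hj; omega]
    rw [sum_range_succ, map_add, sum_congr rfl hshift, ← ih, show i + 1 - i - 1 = 0 by omega,
      Function.iterate_zero_apply, mul_assoc ((-1) ^ i) (δ^[i] u) v, map_neg_one_pow_mul, leibniz,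
      smul_eq_mul, smul_eq_mul,
      Function.iterate_succ_apply' _ i u, Function.iterate_succ_apply _ i v]
    ring

theorem sum_mul_iterate_sub_neg_one_pow_iterate_mul {ι : Type*} (t : Finset ι) (i : ℕ)
    (u v : ι → A) :
    ∑ k ∈ t, (u k * δ^[i] (v k) - (-1) ^ i * δ^[i] (u k) * v k) =
      δ (∑ j ∈ range i, ∑ k ∈ t, (-1) ^ j * δ^[j] (u k) * δ^[i - j - 1] (v k)) := by
  simp_rw [mul_iterate_sub_neg_one_pow_iterate_mul, ← map_sum]
  rw [sum_comm]

end Derivation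

theorem stmt_4_general {A : Type*} [CommRing A] (D : A → A)
    (hadd : ∀ a b : A, D (a + b) = D a + D b)
    (hleib : ∀ a b : A, D (a * b) = a * D b + b * D a)
    (s r p : ℕ)
    (a : ℕ → Matrix (Fin s) (Fin s) A)
    (G γv : Fin p → Fin s → A) (Q γ : Fin s → A)
    (f g : Fin p → A)
    (hf : ∀ β, D (f β) = ∑ k, γv β k * Q k)
    (hg : ∀ β, D (g β) = ∑ k, G β k * γ k)
    (RQ : Fin s → A)
    (hRQ : ∀ k, RQ k = (∑ i ∈ Finset.range (r + 1), ∑ l, a i k l * D^[i] (Q l))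
        + ∑ β, f β * G β k)
    (Rd : Fin s → A)
    (hRd : ∀ k, Rd k = (∑ i ∈ Finset.range (r + 1),
          (-1 : A) ^ i * D^[i] (∑ l, a i l k * γ l))
        - ∑ β, g β * γv β k) :
    (∑ k, RQ k * γ k) - (∑ k, Q k * Rd k)
      = D ((∑ i ∈ Finset.range (r + 1), ∑ j ∈ Finset.range i, ∑ k,
            ((-1 : A) ^ j * D^[j] (∑ l, a i l k * γ l)) * D^[i - j - 1] (Q k))
          + ∑ β, g β * f β) := by
  set b : ℕ → Fin s → A := fun i k => ∑ l, a i l k * γ l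
  have hRQγ : ∑ k, RQ k * γ k =
      ∑ i ∈ range (r + 1), ∑ k, b i k * D^[i] (Q k) + ∑ β, f β * D (g β) := by
    simp only [hRQ, b, hg, add_mul, sum_add_distrib, sum_mul, mul_sum]
    congr 1
    · rw [sum_comm]
      refine sum_congr rfl fun i _ => ?_
      rw [sum_comm]
      exact sum_congr rfl fun k _ => sum_congr rfl fun l _ => by ring
    · rw [sum_comm]
      simp only [mul_assoc]
  have hQRd : ∑ k, Q k * Rd k =
      ∑ i ∈ range (r + 1), ∑ k, (-1) ^ i * D^[i] (b i k) * Q k - ∑ β, g β * D (f β) := by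
    simp only [hRd, b, hf, mul_sub, sum_sub_distrib, mul_sum]
    congr 1
    · rw [sum_comm]
      exact sum_congr rfl fun i _ => sum_congr rfl fun k _ => by ring
    · rw [sum_comm]
      exact sum_congr rfl fun β _ => sum_congr rfl fun k _ => by ring
  obtain ⟨δ, rfl⟩ : ∃ δ : Derivation ℤ A A, ⇑δ = D := ⟨.ofLeibniz D hadd hleib, rfl⟩
  rw [hRQγ, hQRd, map_add, map_sum, map_sum]
  simp_rw [← δ.sum_mul_iterate_sub_neg_one_pow_iterate_mul, δ.leibniz, smul_eq_mul]
  simp only [sum_sub_distrib, sum_add_distrib]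
  ring

/-- Let `A` be a commutative ring, `D : A → A` a derivation, `s ≥ 1`,
`r, p ≥ 0`. Let `a_0, …, a_r` be `s×s` matrices over `A`, let
`G_1, …, G_p, γ_1, …, γ_p, Q, γ ∈ A^s`, and let `f_β, g_β ∈ A` satisfy
`D(f_β) = γ_β·Q` and `D(g_β) = G_β·γ`. With
`R(Q) = Σ_i a_i·D^i(Q) + Σ_β f_β·G_β` and
`R†(γ) = Σ_i (−1)^i D^i(a_iᵀ·γ) − Σ_β g_β·γ_β`, one has
`R(Q)·γ − Q·R†(γ) = D( Σ_{i=1}^r Σ_{j=0}^{i−1} ((−1)^j D^j(a_iᵀ·γ))·D^{i−j−1}(Q) + Σ_β g_β·f_β )`. -/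
theorem stmt_4 {A : Type*} [CommRing A] (D : A → A)
    (hadd : ∀ a b : A, D (a + b) = D a + D b)
    (hleib : ∀ a b : A, D (a * b) = a * D b + b * D a)
    (s r p : ℕ) (hs : 1 ≤ s)
    (a : ℕ → Matrix (Fin s) (Fin s) A)
    (G γv : Fin p → Fin s → A) (Q γ : Fin s → A)
    (f g : Fin p → A)
    (hf : ∀ β, D (f β) = ∑ k, γv β k * Q k)
    (hg : ∀ β, D (g β) = ∑ k, G β k * γ k)
    (RQ : Fin s → A)
    (hRQ : ∀ k, RQ k = (∑ i ∈ Finset.range (r + 1), ∑ l, a i k l * D^[i] (Q l))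
        + ∑ β, f β * G β k)
    (Rd : Fin s → A)
    (hRd : ∀ k, Rd k = (∑ i ∈ Finset.range (r + 1),
          (-1 : A) ^ i * D^[i] (∑ l, a i l k * γ l))
        - ∑ β, g β * γv β k) :
    (∑ k, RQ k * γ k) - (∑ k, Q k * Rd k)
      = D ((∑ i ∈ Finset.range (r + 1), ∑ j ∈ Finset.range i, ∑ k,
            ((-1 : A) ^ j * D^[j] (∑ l, a i l k * γ l)) * D^[i - j - 1] (Q k))
          + ∑ β, g β * f β) :=
  stmt_4_general D hadd hleib s r p a G γv Q γ f g hf hg RQ hRQ Rd hRd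
end

section
/- Let L be a Lie algebra over a commutative ring R, N : L → L an R-linear map, and Q ∈ L. If L_{N^i(Q)}(N) = 0 for every integer i ≥ 0, then [N^i(Q), N^j(Q)] = 0 for all integers i, j ≥ 0. -/
/-- Let `L` be a Lie algebra over a commutative ring `R`, `N : L → L` an
`R`-linear map, and `Q ∈ L`. If `L_{N^i(Q)}(N) = 0` for every `i ≥ 0` (where
`L_P(N)(X) = ⁅P, N X⁆ − N ⁅P, X⁆`), then `⁅N^i(Q), N^j(Q)⁆ = 0` for all `i, j ≥ 0`. -/
theorem stmt_6 {R L : Type*} [CommRing R] [LieRing L] [LieAlgebra R L]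
    (N : L →ₗ[R] L) (Q : L)
    (h : ∀ (i : ℕ) (X : L), ⁅(⇑N)^[i] Q, N X⁆ - N ⁅(⇑N)^[i] Q, X⁆ = 0) :
    ∀ i j : ℕ, ⁅(⇑N)^[i] Q, (⇑N)^[j] Q⁆ = 0 := by
  have h'' : ∀ (i : ℕ) (X : L), ⁅(⇑N)^[i] Q, N X⁆ = N ⁅(⇑N)^[i] Q, X⁆ := fun i X =>
    sub_eq_zero.mp (h i X)
  have base : ∀ i : ℕ, ⁅Q, (⇑N)^[i] Q⁆ = 0 := by
    intro i
    induction i with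
    | zero => simp
    | succ n ih =>
      rw [Function.iterate_succ_apply']
      have := h'' 0 ((⇑N)^[n] Q)
      simp only [Function.iterate_zero, id] at this
      rw [this, ih, map_zero]
  intro i j
  induction j with
  | zero =>
    simp only [Function.iterate_zero, id]
    rw [← lie_skew, base i, neg_zero]
  | succ n ih =>
    rw [Function.iterate_succ_apply', h'' i, ih, map_zero]
end

section
/- Let L be a Lie algebra over a commutative ring R, N : L → L an R-linear map, and Q ∈ L. Let S(N,Q) denote the R-submodule of L spanned by {N^i(Q) : i ≥ 0}. Then L_{N^i(Q)}(N) = 0 for all integers i ≥ 0 if and only if both L_Q(N) = 0 and N is hereditary on S(N,Q), i.e., L_{N(Y)}(N) = N ∘ L_Y(N) as maps L → L for every Y ∈ S(N,Q). -/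
/-- Let `L` be a Lie algebra over a commutative ring `R`, `N : L → L` an
`R`-linear map, and `Q ∈ L`. Let `S(N,Q)` be the `R`-submodule spanned by
`{N^i(Q) : i ≥ 0}`. Then `L_{N^i(Q)}(N) = 0` for all `i ≥ 0` if and only if both
`L_Q(N) = 0` and `N` is hereditary on `S(N,Q)`, i.e.
`L_{N(Y)}(N) = N ∘ L_Y(N)` as maps `L → L` for every `Y ∈ S(N,Q)`. -/
theorem stmt_7 {R L : Type*} [CommRing R] [LieRing L] [LieAlgebra R L]
    (N : L →ₗ[R] L) (Q : L) :
    (∀ (i : ℕ) (X : L), ⁅(⇑N)^[i] Q, N X⁆ - N ⁅(⇑N)^[i] Q, X⁆ = 0) ↔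
      ((∀ X : L, ⁅Q, N X⁆ - N ⁅Q, X⁆ = 0) ∧
        ∀ Y ∈ Submodule.span R (Set.range fun i : ℕ => (⇑N)^[i] Q),
          ∀ X : L, ⁅N Y, N X⁆ - N ⁅N Y, X⁆ = N (⁅Y, N X⁆ - N ⁅Y, X⁆)) := by
  constructor
  · intro h
    refine ⟨fun X => h 0 X, fun Y hY => ?_⟩
    induction hY using Submodule.span_induction with
    | mem y hy =>
      obtain ⟨i, rfl⟩ := hy
      intro X
      have h1 : ⁅N ((⇑N)^[i] Q), N X⁆ - N ⁅N ((⇑N)^[i] Q), X⁆ = 0 := by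
        have := h (i + 1) X
        rwa [Function.iterate_succ_apply'] at this
      rw [h1, h i X, map_zero]
    | zero => intro X; simp
    | add y z _ _ hy hz =>
      intro X
      have := hy X
      have := hz X
      simp only [map_add, add_lie, lie_add, map_sub] at *
      abel_nf
      linear_combination (norm := abel) hy X + hz X
    | smul r y _ hy =>
      intro X
      have := hy X
      simp only [map_smul, smul_lie, map_sub] at *
      rw [← smul_sub, ← smul_sub, this]
  · rintro ⟨h0, hher⟩ i
    induction i with
    | zero => simpa using h0
    | succ i ih =>
      intro X
      rw [Function.iterate_succ_apply']
      have hmem : (⇑N)^[i] Q ∈ Submodule.span R (Set.range fun i : ℕ => (⇑N)^[i] Q) :=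
        Submodule.subset_span ⟨i, rfl⟩
      rw [hher _ hmem X, ih X, map_zero]
end

section
/- Let L be a Lie algebra over a commutative ring R, let N : L → L be a hereditary R-linear map, and let Q ∈ L satisfy L_Q(N) = 0. Then the hierarchy generated by N from the seed Q commutes: [N^i(Q), N^j(Q)] = 0 for all integers i, j ≥ 0. -/
/-- Let `L` be a Lie algebra over a commutative ring `R`, `N : L → L` a
hereditary `R`-linear map, and `Q ∈ L` with `L_Q(N) = 0`. Then the hierarchy generated
by `N` from the seed `Q` commutes: `⁅N^i(Q), N^j(Q)⁆ = 0` for all `i, j ≥ 0`. -/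
theorem stmt_8 {R L : Type*} [CommRing R] [LieRing L] [LieAlgebra R L]
    (N : L →ₗ[R] L)
    (hered : ∀ Y X : L, ⁅N Y, N X⁆ - N ⁅N Y, X⁆ = N (⁅Y, N X⁆ - N ⁅Y, X⁆))
    (Q : L) (hQ : ∀ X : L, ⁅Q, N X⁆ - N ⁅Q, X⁆ = 0) :
    ∀ i j : ℕ, ⁅(⇑N)^[i] Q, (⇑N)^[j] Q⁆ = 0 := by
  have key : ∀ k (X : L), ⁅(⇑N)^[k] Q, N X⁆ = N ⁅(⇑N)^[k] Q, X⁆ := by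
    intro k
    induction k with
    | zero => intro X; simpa [sub_eq_zero] using hQ X
    | succ k ih =>
      intro X
      have h := hered ((⇑N)^[k] Q) X
      rw [ih X, sub_self, map_zero, sub_eq_zero] at h
      simpa [Function.iterate_succ_apply'] using h
  intro i j
  induction j with
  | zero =>
    simp only [Function.iterate_zero, id]
    rw [← neg_eq_zero, ← lie_skew]
    clear key
    induction i with
    | zero => simp
    | succ i ih =>
      have k0 : ∀ X : L, ⁅Q, N X⁆ = N ⁅Q, X⁆ := fun X => by
        simpa [sub_eq_zero] using hQ X
      simp only [neg_neg] at ih ⊢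
      rw [Function.iterate_succ_apply', k0, ih, map_zero]
  | succ j ih =>
    rw [Function.iterate_succ_apply', key, ih, map_zero]
end

section
/- Let K be a field of characteristic zero, s ≥ 1, and let A be the polynomial ring over K in the variable x and the variables u^k_j (1 ≤ k ≤ s, j ≥ 0), with D : A → A the unique K-derivation satisfying D(x) = 1 and D(u^k_j) = u^k_{j+1}. Then the kernel of D in A consists exactly of the constants: D(f) = 0 if and only if f ∈ K (f is a constant polynomial). -/
/-- The algebra of differential polynomials in `x` (the variable `none`) and
`u^k_j = X (some (k, j))`, `1 ≤ k ≤ s`, `j ≥ 0`, over a field `K`. -/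
abbrev DiffPoly (K : Type*) [Field K] (s : ℕ) : Type _ :=
  MvPolynomial (Option (Fin s × ℕ)) K

/-!
Write `∂ₓ` and `∂ₖⱼ` for the partial derivatives in `x` and `u^k_j`. On generators one checks the
commutation rule `∂ₖ,ⱼ₊₁ ∘ D - D ∘ ∂ₖ,ⱼ₊₁ = ∂ₖⱼ`. Hence if `D f = 0` and `∂ₖ,ⱼ₊₁ f = 0` then
`∂ₖⱼ f = 0`; since `∂ₖⱼ f = 0` for `j` large, downward induction kills every `∂ₖⱼ f`. In
characteristic zero this means that `f` involves `x` only, so `0 = D f = ∂ₓ f`, and `f` is constant.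
-/

open MvPolynomial

namespace MvPolynomial

section CharZero

variable {σ R : Type*} [CommRing R] [IsDomain R] [CharZero R]

theorem notMem_vars_of_pderiv_eq_zero {i : σ} {f : MvPolynomial σ R} (h : pderiv i f = 0) :
    i ∉ f.vars := by
  classical
  intro hi
  obtain ⟨m, hm, hmi⟩ := (mem_vars_iff_mem_support i).1 hi
  have hle : Finsupp.single i 1 ≤ m :=
    Finsupp.single_le_iff.2 (Nat.one_le_iff_ne_zero.2 (Finsupp.mem_support_iff.1 hmi))
  have hcoeff := coeff_pderiv (i := i) f (m - Finsupp.single i 1)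
  rw [h, coeff_zero, tsub_add_cancel_of_le hle] at hcoeff
  exact mul_ne_zero (mem_support_iff.1 hm) (Nat.cast_add_one_ne_zero _) hcoeff.symm

theorem eq_C_of_forall_pderiv_eq_zero {f : MvPolynomial σ R} (h : ∀ i, pderiv i f = 0) :
    f = C (f.coeff 0) :=
  vars_eq_empty_iff_eq_C.1 <|
    Finset.eq_empty_of_forall_notMem fun i => notMem_vars_of_pderiv_eq_zero (h i)

end CharZero

section TotalDerivative

variable {R ι : Type*} [CommRing R]
  (D : Derivation R (MvPolynomial (Option (ι × ℕ)) R) (MvPolynomial (Option (ι × ℕ)) R))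

theorem commutator_pderiv_some_succ (hx : D (X none) = 1)
    (hu : ∀ k j, D (X (some (k, j))) = X (some (k, j + 1))) (k : ι) (j : ℕ) :
    ⁅pderiv (R := R) (some (k, j + 1)), D⁆ = pderiv (some (k, j)) := by
  classical
  refine derivation_ext fun p => ?_
  have hconst : D (pderiv (some (k, j + 1)) (X p)) = 0 := by
    rw [pderiv_X, Pi.single_apply]
    split_ifs <;> simp
  rw [Derivation.commutator_apply, hconst, sub_zero]
  rcases p with _ | ⟨k', j'⟩
  · simp [hx]
  · simp [hu, pderiv_X, Pi.single_apply]

variable {D} {f : MvPolynomial (Option (ι × ℕ)) R}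

theorem pderiv_eq_zero_of_pderiv_succ_eq_zero (hx : D (X none) = 1)
    (hu : ∀ k j, D (X (some (k, j))) = X (some (k, j + 1))) (hf : D f = 0) {k : ι} {j : ℕ}
    (h : pderiv (some (k, j + 1)) f = 0) : pderiv (some (k, j)) f = 0 := by
  simpa [Derivation.commutator_apply, hf, h] using
    (DFunLike.congr_fun (commutator_pderiv_some_succ D hx hu k j) f).symm

theorem pderiv_some_eq_zero_of_apply_eq_zero (hx : D (X none) = 1)
    (hu : ∀ k j, D (X (some (k, j))) = X (some (k, j + 1)))
    (hf : D f = 0) (k : ι) (j : ℕ) :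
    pderiv (some (k, j)) f = 0 := by
  refine Nat.decreasing_induction_of_infinite (P := fun j => pderiv (some (k, j)) f = 0)
    (fun j => pderiv_eq_zero_of_pderiv_succ_eq_zero hx hu hf) ?_ j
  have hfin : ((fun j => some (k, j)) ⁻¹' (f.vars : Set (Option (ι × ℕ)))).Finite :=
    f.vars.finite_toSet.preimage fun _ _ _ _ h => by simpa using h
  exact hfin.infinite_compl.mono fun j hj => pderiv_eq_zero_of_notMem_vars hj

theorem apply_eq_pderiv_none [IsDomain R] [CharZero R] (hx : D (X none) = 1)
    (h : ∀ k j, pderiv (some (k, j)) f = 0) : D f = pderiv none f := by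
  refine derivation_eq_of_forall_mem_vars fun i hi => ?_
  rcases i with _ | ⟨k, j⟩
  · simp [hx]
  · exact absurd hi (notMem_vars_of_pderiv_eq_zero (h k j))

end TotalDerivative

end MvPolynomial

theorem stmt_9_general {K : Type*} [Field K] [CharZero K] (s : ℕ)
    (D : Derivation K (DiffPoly K s) (DiffPoly K s))
    (hx : D (MvPolynomial.X none) = 1)
    (hu : ∀ (k : Fin s) (j : ℕ),
      D (MvPolynomial.X (some (k, j))) = MvPolynomial.X (some (k, j + 1)))
    (f : DiffPoly K s) :
    D f = 0 ↔ ∃ c : K, f = MvPolynomial.C c := by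
  refine ⟨fun hf => ?_, fun ⟨c, hc⟩ => hc ▸ D.map_algebraMap c⟩
  have hsome := pderiv_some_eq_zero_of_apply_eq_zero hx hu hf
  have hnone : pderiv none f = 0 := (apply_eq_pderiv_none hx hsome).symm.trans hf
  exact ⟨_, eq_C_of_forall_pderiv_eq_zero (Option.rec hnone fun p => hsome p.1 p.2)⟩

/-- Let `K` be a field of characteristic zero, `s ≥ 1`, and `A` the
polynomial ring over `K` in `x` and the variables `u^k_j`, with `D` the unique
`K`-derivation satisfying `D(x) = 1` and `D(u^k_j) = u^k_{j+1}` (the total derivative).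
Then the kernel of `D` in `A` consists exactly of the constants:
`D(f) = 0` iff `f` is a constant polynomial. -/
theorem stmt_9 {K : Type*} [Field K] [CharZero K] (s : ℕ) (hs : 1 ≤ s)
    (D : Derivation K (DiffPoly K s) (DiffPoly K s))
    (hx : D (MvPolynomial.X none) = 1)
    (hu : ∀ (k : Fin s) (j : ℕ),
      D (MvPolynomial.X (some (k, j))) = MvPolynomial.X (some (k, j + 1)))
    (f : DiffPoly K s) :
    D f = 0 ↔ ∃ c : K, f = MvPolynomial.C c :=
  stmt_9_general s D hx hu f
end

section
/- Let K be a field of characteristic zero, s ≥ 1, and let A be the algebra of differential polynomials in x and u^k_j with total derivative D. For f ∈ A, the variational derivatives δf/δu^k vanish for all k = 1, …, s if and only if f lies in the image of D, i.e., f = D(g) for some g ∈ A. -/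
/-- The variational derivative `δf/δu^k = Σ_{j≥0} (−1)^j D^j(∂f/∂u^k_j)`
(a finite sum, expressed as a `finsum`). -/
noncomputable def varDeriv {K : Type*} [Field K] {s : ℕ}
    (D : Derivation K (DiffPoly K s) (DiffPoly K s))
    (f : DiffPoly K s) (k : Fin s) : DiffPoly K s :=
  ∑ᶠ j : ℕ, (-1 : DiffPoly K s) ^ j * (⇑D)^[j] (MvPolynomial.pderiv (some (k, j)) f)

namespace Stmt10Aux

open MvPolynomial Finset

variable {K : Type*} [Field K] [CharZero K] {s : ℕ}

/-- weight: x has weight 0, u-variables weight 1 -/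
def w (s : ℕ) : Option (Fin s × ℕ) → ℕ := fun i => i.elim 0 fun _ => 1

/-- boundedness of variables -/
def Bnd (N : ℕ) (f : DiffPoly K s) : Prop :=
  ∀ (k : Fin s) (j : ℕ), N ≤ j → (some (k, j) : Option (Fin s × ℕ)) ∉ f.vars

lemma exists_bnd (f : DiffPoly K s) : ∃ N, Bnd N f := by
  refine ⟨(f.vars.sup fun i => i.elim 0 fun p => p.2 + 1), fun k j hj hmem => ?_⟩
  have := Finset.le_sup (f := fun i : Option (Fin s × ℕ) => i.elim 0 fun p => p.2 + 1) hmem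
  simp only [Option.elim_some] at this
  omega

lemma Bnd.mono {N M : ℕ} {f : DiffPoly K s} (h : Bnd N f) (hNM : N ≤ M) : Bnd M f :=
  fun k j hj => h k j (le_trans hNM hj)

lemma Bnd.pderiv_eq_zero {N : ℕ} {f : DiffPoly K s} (h : Bnd N f) {k : Fin s} {j : ℕ}
    (hj : N ≤ j) : pderiv (some (k, j)) f = 0 :=
  pderiv_eq_zero_of_notMem_vars (h k j hj)

variable (D : Derivation K (DiffPoly K s) (DiffPoly K s))

lemma iterD_zero (n : ℕ) : (⇑D)^[n] (0 : DiffPoly K s) = 0 :=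
  Function.iterate_fixed (map_zero D) n

lemma varDeriv_eq_sum {N : ℕ} {f : DiffPoly K s} (h : Bnd N f) (k : Fin s) :
    varDeriv D f k = ∑ j ∈ range N, (-1 : DiffPoly K s) ^ j * (⇑D)^[j] (pderiv (some (k, j)) f) := by
  apply finsum_eq_finset_sum_of_support_subset
  intro j hj
  simp only [Function.mem_support] at hj
  by_contra hjN
  simp only [Finset.coe_range, Set.mem_Iio, not_lt] at hjN
  exact hj (by rw [h.pderiv_eq_zero hjN, iterD_zero, mul_zero])

variable {D} (hx : D (MvPolynomial.X none) = 1)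
variable (hu : ∀ (k : Fin s) (j : ℕ),
      D (MvPolynomial.X (some (k, j))) = MvPolynomial.X (some (k, j + 1)))

include hx hu in
lemma pderiv_D_comm (k : Fin s) (j : ℕ) (g : DiffPoly K s) :
    pderiv (some (k, j + 1)) (D g)
      = D (pderiv (some (k, j + 1)) g) + pderiv (some (k, j)) g := by
  have key : ⁅(pderiv (some (k, j + 1)) : Derivation K _ _), D⁆ = pderiv (some (k, j)) := by
    apply derivation_ext
    intro i
    rw [Derivation.commutator_apply]
    match i with
    | none => simp [hx]
    | some (k', j') =>
      classical
      rw [hu]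
      have h4 : D (pderiv (some (k, j + 1)) (X (some (k', j'))
          : DiffPoly K s)) = 0 := by
        by_cases h : (some (k', j') : Option (Fin s × ℕ)) = some (k, j + 1)
        · rw [h, pderiv_X_self]; exact Derivation.map_one_eq_zero D
        · rw [pderiv_X_of_ne h, map_zero]
      rw [h4, sub_zero]
      by_cases hkj : (k', j') = (k, j)
      · obtain ⟨h1, h2⟩ := Prod.mk.injEq .. ▸ hkj
        subst h1; subst h2
        rw [pderiv_X_self, pderiv_X_self]
      · have h1 : some (k', j' + 1) ≠ some (k, j + 1) := by
          simp only [ne_eq, Option.some.injEq, Prod.mk.injEq, not_and]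
          intro a b
          exact hkj (by rw [a]; exact congrArg _ (by omega))
        have h3 : some (k', j') ≠ some (k, j) := by simpa using hkj
        rw [pderiv_X_of_ne h1, pderiv_X_of_ne h3]
  have := congrArg (fun E : Derivation K _ _ => E g) key
  simp only [Derivation.commutator_apply] at this
  linear_combination (norm := ring_nf) this

include hx hu in
lemma pderiv_D_comm_zero (k : Fin s) (g : DiffPoly K s) :
    pderiv (some (k, 0)) (D g) = D (pderiv (some (k, 0)) g) := by
  have key : ⁅(pderiv (some (k, 0)) : Derivation K _ _), D⁆ = 0 := by
    apply derivation_ext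
    intro i
    rw [Derivation.commutator_apply]
    match i with
    | none => simp [hx]
    | some (k', j') =>
      classical
      rw [hu]
      have h4 : D (pderiv (some (k, 0)) (X (some (k', j'))
          : DiffPoly K s)) = 0 := by
        by_cases h : (some (k', j') : Option (Fin s × ℕ)) = some (k, 0)
        · rw [h, pderiv_X_self]; exact Derivation.map_one_eq_zero D
        · rw [pderiv_X_of_ne h, map_zero]
      rw [h4, sub_zero, pderiv_X_of_ne (by simp), Derivation.coe_zero, Pi.zero_apply]
  have := congrArg (fun E : Derivation K _ _ => E g) key
  simp only [Derivation.commutator_apply, Derivation.coe_zero, Pi.zero_apply] at this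
  linear_combination (norm := ring_nf) this

lemma iterD_add (n : ℕ) (a b : DiffPoly K s) :
    (⇑D)^[n] (a + b) = (⇑D)^[n] a + (⇑D)^[n] b := by
  induction n generalizing a b with
  | zero => rfl
  | succ n ih =>
      rw [Function.iterate_succ_apply, Function.iterate_succ_apply,
        Function.iterate_succ_apply, map_add, ih]

include hx hu in
lemma varDeriv_D_eq_zero (g : DiffPoly K s) (k : Fin s) : varDeriv D (D g) k = 0 := by
  obtain ⟨N₁, hN₁⟩ := exists_bnd g
  obtain ⟨N₂, hN₂⟩ := exists_bnd (D g)
  set N := max N₁ N₂ with hN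
  have hg : Bnd N g := hN₁.mono (le_max_left ..)
  have hDg : Bnd (N + 1) (D g) := hN₂.mono (le_trans (le_max_right ..) (Nat.le_succ N))
  rw [varDeriv_eq_sum D hDg k, Finset.sum_range_succ']
  set p : ℕ → DiffPoly K s := fun j => pderiv (some (k, j)) g with hp
  set b : ℕ → DiffPoly K s := fun i => (-1 : DiffPoly K s) ^ i * (⇑D)^[i + 1] (p i) with hb
  have hterm : ∀ i ∈ Finset.range N,
      (-1 : DiffPoly K s) ^ (i + 1) * (⇑D)^[i + 1] (pderiv (some (k, i + 1)) (D g))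
        = b (i + 1) - b i := by
    intro i _
    rw [pderiv_D_comm hx hu, iterD_add, ← Function.iterate_succ_apply]
    simp only [hb, pow_succ]
    ring
  rw [Finset.sum_congr rfl hterm, Finset.sum_range_sub b]
  have hbN : b N = 0 := by
    simp only [hb, hp, hg.pderiv_eq_zero (le_refl N), iterD_zero, mul_zero]
  have hb0 : (-1 : DiffPoly K s) ^ 0 * (⇑D)^[0] (pderiv (some (k, 0)) (D g)) = b 0 := by
    simp only [hb, hp, pow_zero, one_mul, Function.iterate_zero_apply, Function.iterate_one]
    exact pderiv_D_comm_zero hx hu k g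
  rw [hbN, hb0]
  ring

noncomputable def Rg (K : Type*) [Field K] (s : ℕ) :
    Derivation K (DiffPoly K s) (DiffPoly K s) :=
  mkDerivation K fun i => i.elim 0 fun p => X (some p)

lemma Rg_monomial (m : Option (Fin s × ℕ) →₀ ℕ) (c : K) :
    Rg K s (monomial m c) = (Finsupp.weight (w s) m) • monomial m c := by
  rw [Rg, mkDerivation_monomial, Finsupp.sum, Finsupp.weight_apply, Finsupp.sum,
    Finset.sum_smul, Finset.smul_sum]
  refine Finset.sum_congr rfl fun i hi => ?_
  match i with
  | none => simp [w]
  | some p =>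
      have hle : Finsupp.single (some p : Option (Fin s × ℕ)) 1 ≤ m := by
        rw [Finsupp.single_le_iff]
        exact Nat.one_le_iff_ne_zero.2 (Finsupp.mem_support_iff.1 hi)
      simp only [Option.elim, w, smul_eq_mul, mul_one]
      rw [X, monomial_mul, tsub_add_cancel_of_le hle]
      rw [mul_one, smul_monomial, smul_monomial, smul_eq_mul, nsmul_eq_mul, mul_comm]

lemma Rg_homog {φ : DiffPoly K s} {d : ℕ}
    (h : φ.IsWeightedHomogeneous (w s) d) : Rg K s φ = d • φ := by
  conv_lhs => rw [φ.as_sum]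
  rw [map_sum]
  conv_rhs => rw [φ.as_sum, Finset.smul_sum]
  refine Finset.sum_congr rfl fun m hm => ?_
  rw [Rg_monomial, h (mem_support_iff.1 hm)]

lemma derivation_sum_apply {ι : Type*} (S : Finset ι)
    (Ds : ι → Derivation K (DiffPoly K s) (DiffPoly K s))
    (a : DiffPoly K s) :
    (∑ i ∈ S, Ds i) a = ∑ i ∈ S, Ds i a := by
  have h1 : ⇑(∑ i ∈ S, Ds i) = ∑ i ∈ S, ⇑(Ds i) := map_sum Derivation.coeFnAddMonoidHom Ds S
  rw [h1, Finset.sum_apply]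

lemma Rg_eq_sum {N : ℕ} {f : DiffPoly K s}
    (hN : ∀ (k : Fin s) (j : ℕ), N ≤ j → (some (k, j) : Option (Fin s × ℕ)) ∉ f.vars) :
    Rg K s f = ∑ k : Fin s, ∑ j ∈ range N, X (some (k, j)) * pderiv (some (k, j)) f := by
  classical
  have key : Rg K s f =
      (∑ k : Fin s, ∑ j ∈ range N,
        (X (some (k, j)) : DiffPoly K s) • pderiv (some (k, j))) f := by
    apply derivation_eq_of_forall_mem_vars
    intro i hi
    rw [derivation_sum_apply]
    match i with
    | none =>
        rw [Rg, mkDerivation_X]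
        simp only [Option.elim]
        symm
        refine Finset.sum_eq_zero fun k _ => ?_
        rw [derivation_sum_apply]
        refine Finset.sum_eq_zero fun j _ => ?_
        rw [Derivation.smul_apply, pderiv_X_of_ne (by simp), smul_zero]
    | some (k₀, j₀) =>
        have hj₀ : j₀ < N := by
          by_contra hcon
          exact hN k₀ j₀ (not_lt.1 hcon) hi
        rw [Rg, mkDerivation_X]
        simp only [Option.elim]
        rw [Finset.sum_eq_single k₀]
        · rw [derivation_sum_apply, Finset.sum_eq_single j₀]
          · rw [Derivation.smul_apply, pderiv_X_self, smul_eq_mul, mul_one]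
          · intro j _ hj
            rw [Derivation.smul_apply, pderiv_X_of_ne (by simp; intro h; exact hj h.symm), smul_zero]
          · intro h; exact absurd (Finset.mem_range.2 hj₀) h
        · intro k _ hk
          rw [derivation_sum_apply]
          refine Finset.sum_eq_zero fun j _ => ?_
          rw [Derivation.smul_apply, pderiv_X_of_ne (by simp; intro h _; exact absurd h.symm hk), smul_zero]
        · intro h; exact absurd (Finset.mem_univ k₀) h
  rw [key, derivation_sum_apply]
  refine Finset.sum_congr rfl fun k _ => ?_
  rw [derivation_sum_apply]
  refine Finset.sum_congr rfl fun j _ => ?_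
  rw [Derivation.smul_apply, smul_eq_mul]

include hu in
lemma telescope (k : Fin s) (j : ℕ) (P : DiffPoly K s) :
    X (some (k, j)) * P
      = D (∑ i ∈ range j, (-1 : DiffPoly K s) ^ i
            * (X (some (k, j - 1 - i)) * (⇑D)^[i] P))
        + (-1 : DiffPoly K s) ^ j * (X (some (k, 0)) * (⇑D)^[j] P) := by
  induction j generalizing P with
  | zero => simp
  | succ j ih =>
      have hle : D (X (some (k, j)) * P) = X (some (k, j + 1)) * P + X (some (k, j)) * D P := by
        rw [Derivation.leibniz, hu, smul_eq_mul, smul_eq_mul]; ring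
      have hsum : ∑ i ∈ range (j + 1), (-1 : DiffPoly K s) ^ i
            * (X (some (k, j + 1 - 1 - i)) * (⇑D)^[i] P)
          = X (some (k, j)) * P - ∑ i ∈ range j, (-1 : DiffPoly K s) ^ i
            * (X (some (k, j - 1 - i)) * (⇑D)^[i] (D P)) := by
        rw [Finset.sum_range_succ']
        have hterm : ∀ i ∈ range j,
            (-1 : DiffPoly K s) ^ (i + 1)
              * (X (some (k, j + 1 - 1 - (i + 1))) * (⇑D)^[i + 1] P)
            = -((-1 : DiffPoly K s) ^ i
              * (X (some (k, j - 1 - i)) * (⇑D)^[i] (D P))) := by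
          intro i _
          rw [Function.iterate_succ_apply]
          have hidx : j + 1 - 1 - (i + 1) = j - 1 - i := by omega
          rw [hidx]; ring
        rw [Finset.sum_congr rfl hterm, Finset.sum_neg_distrib]
        simp only [pow_zero, one_mul, Nat.add_sub_cancel, Nat.sub_zero,
          Function.iterate_zero_apply]
        ring
      conv_rhs => rw [hsum]
      rw [map_sub, Function.iterate_succ_apply]
      linear_combination -hle - ih (D P)

include hx hu in
lemma master {N : ℕ} {f : DiffPoly K s} (hN : Bnd N f) (hE : ∀ k, varDeriv D f k = 0) :
    ∃ G : DiffPoly K s, Rg K s f = D G := by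
  refine ⟨∑ k : Fin s, ∑ j ∈ range N, ∑ i ∈ range j,
    (-1 : DiffPoly K s) ^ i * (X (some (k, j - 1 - i)) * (⇑D)^[i] (pderiv (some (k, j)) f)), ?_⟩
  rw [Rg_eq_sum hN]
  rw [map_sum]
  refine Finset.sum_congr rfl fun k _ => ?_
  rw [map_sum]
  have step : ∀ j ∈ range N, X (some (k, j)) * pderiv (some (k, j)) f
      = D (∑ i ∈ range j, (-1 : DiffPoly K s) ^ i
            * (X (some (k, j - 1 - i)) * (⇑D)^[i] (pderiv (some (k, j)) f)))
        + (-1 : DiffPoly K s) ^ j * (X (some (k, 0)) * (⇑D)^[j] (pderiv (some (k, j)) f)) :=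
    fun j _ => telescope hu k j _
  rw [Finset.sum_congr rfl step, Finset.sum_add_distrib]
  have hzero : ∑ j ∈ range N,
      (-1 : DiffPoly K s) ^ j * (X (some (k, 0)) * (⇑D)^[j] (pderiv (some (k, j)) f)) = 0 := by
    have := varDeriv_eq_sum D hN k
    rw [hE k] at this
    calc ∑ j ∈ range N,
        (-1 : DiffPoly K s) ^ j * (X (some (k, 0)) * (⇑D)^[j] (pderiv (some (k, j)) f))
        = X (some (k, 0)) * ∑ j ∈ range N,
            (-1 : DiffPoly K s) ^ j * (⇑D)^[j] (pderiv (some (k, j)) f) := by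
          rw [Finset.mul_sum]; exact Finset.sum_congr rfl fun j _ => by ring
      _ = 0 := by rw [← this, mul_zero]
  rw [hzero, add_zero]

lemma isWH_zero (d : ℕ) : ((0 : DiffPoly K s)).IsWeightedHomogeneous (w s) d :=
  fun m hm => absurd (coeff_zero m) hm

lemma weight_single_le {m : Option (Fin s × ℕ) →₀ ℕ} {i : Option (Fin s × ℕ)}
    (h : m i ≠ 0) : Finsupp.single i 1 ≤ m := by
  rw [Finsupp.single_le_iff]; omega

lemma weight_sub_single {m : Option (Fin s × ℕ) →₀ ℕ} {i : Option (Fin s × ℕ)}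
    (h : m i ≠ 0) :
    Finsupp.weight (w s) (m - Finsupp.single i 1) + w s i = Finsupp.weight (w s) m := by
  conv_rhs => rw [← tsub_add_cancel_of_le (weight_single_le h)]
  rw [map_add]
  congr 1
  rw [Finsupp.weight_apply, Finsupp.sum_single_index]
  · simp
  · simp

lemma pderiv_none_homog {φ : DiffPoly K s} {d : ℕ}
    (h : φ.IsWeightedHomogeneous (w s) d) :
    (pderiv none φ).IsWeightedHomogeneous (w s) d := by
  rw [φ.as_sum, map_sum]
  refine IsWeightedHomogeneous.sum _ _ _ fun m hm => ?_
  rw [pderiv_monomial]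
  by_cases h0 : m none = 0
  · rw [h0]; simp only [Nat.cast_zero, mul_zero, monomial_zero]; exact isWH_zero d
  · apply isWeightedHomogeneous_monomial
    have := weight_sub_single (s := s) (i := none) h0
    have hw : w s none = 0 := rfl
    rw [hw, add_zero] at this
    rw [this]
    exact h (mem_support_iff.1 hm)

lemma X_mul_pderiv_homog {φ : DiffPoly K s} {d : ℕ}
    (h : φ.IsWeightedHomogeneous (w s) d) (p q : Fin s × ℕ) :
    (X (some q) * pderiv (some p) φ).IsWeightedHomogeneous (w s) d := by
  rw [φ.as_sum, map_sum, Finset.mul_sum]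
  refine IsWeightedHomogeneous.sum _ _ _ fun m hm => ?_
  rw [pderiv_monomial]
  by_cases h0 : m (some p) = 0
  · rw [h0]; simp only [Nat.cast_zero, mul_zero, monomial_zero, MulZeroClass.mul_zero]
    exact isWH_zero d
  · rw [X, monomial_mul, one_mul]
    apply isWeightedHomogeneous_monomial
    rw [map_add]
    have h1 : Finsupp.weight (w s) (Finsupp.single (some q : Option (Fin s × ℕ)) 1) = 1 := by
      rw [Finsupp.weight_apply, Finsupp.sum_single_index] <;> simp [w]
    have h2 := weight_sub_single (s := s) (i := some p) h0
    have hw : w s (some p) = 1 := rfl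
    rw [hw] at h2
    have h3 : Finsupp.weight (w s) m = d := h (mem_support_iff.1 hm)
    omega

include hx hu in
lemma D_eq_sum {N : ℕ} {f : DiffPoly K s}
    (hN : ∀ (k : Fin s) (j : ℕ), N ≤ j → (some (k, j) : Option (Fin s × ℕ)) ∉ f.vars) :
    D f = pderiv none f + ∑ k : Fin s, ∑ j ∈ range N,
      X (some (k, j + 1)) * pderiv (some (k, j)) f := by
  classical
  set Dalt : Derivation K (DiffPoly K s) (DiffPoly K s) :=
    (pderiv none) + ∑ k : Fin s, ∑ j ∈ range N,
      (X (some (k, j + 1)) : DiffPoly K s) • pderiv (some (k, j)) with hDalt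
  have key : D f = Dalt f := by
    apply derivation_eq_of_forall_mem_vars
    intro i hi
    rw [Derivation.add_apply, derivation_sum_apply]
    match i with
    | none =>
        rw [hx, pderiv_X_self]
        have : ∀ k : Fin s, (∑ j ∈ range N,
            (X (some (k, j + 1)) : DiffPoly K s) • pderiv (some (k, j)) :
            Derivation K (DiffPoly K s) (DiffPoly K s))
              (X none) = 0 := by
          intro k
          rw [derivation_sum_apply]
          refine Finset.sum_eq_zero fun j _ => ?_
          rw [Derivation.smul_apply, pderiv_X_of_ne (by simp), smul_zero]
        rw [Finset.sum_congr rfl fun k _ => this k]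
        simp
    | some (k₀, j₀) =>
        have hj₀ : j₀ < N := by
          by_contra hcon
          exact hN k₀ j₀ (not_lt.1 hcon) hi
        rw [hu, pderiv_X_of_ne (by simp), Finset.sum_eq_single k₀]
        · rw [derivation_sum_apply, Finset.sum_eq_single j₀]
          · rw [Derivation.smul_apply, pderiv_X_self, smul_eq_mul, mul_one, zero_add]
          · intro j _ hj
            rw [Derivation.smul_apply,
              pderiv_X_of_ne (by simp; intro h; exact hj h.symm), smul_zero]
          · intro h; exact absurd (Finset.mem_range.2 hj₀) h
        · intro k _ hk
          rw [derivation_sum_apply]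
          refine Finset.sum_eq_zero fun j _ => ?_
          rw [Derivation.smul_apply,
            pderiv_X_of_ne (by simp; intro h _; exact absurd h.symm hk), smul_zero]
        · intro h; exact absurd (Finset.mem_univ k₀) h
  rw [key, Derivation.add_apply, derivation_sum_apply]
  congr 1
  refine Finset.sum_congr rfl fun k _ => ?_
  rw [derivation_sum_apply]
  refine Finset.sum_congr rfl fun j _ => ?_
  rw [Derivation.smul_apply, smul_eq_mul]
include hx hu in
lemma D_homog {φ : DiffPoly K s} {d : ℕ} (h : φ.IsWeightedHomogeneous (w s) d) :
    (D φ).IsWeightedHomogeneous (w s) d := by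
  obtain ⟨N, hN⟩ := exists_bnd φ
  rw [D_eq_sum hx hu hN]
  refine (pderiv_none_homog h).add (IsWeightedHomogeneous.sum _ _ _ fun k _ => ?_)
  exact IsWeightedHomogeneous.sum _ _ _ fun j _ => X_mul_pderiv_homog h _ _

include hx hu in
lemma comp_D (e : ℕ) (g : DiffPoly K s) :
    weightedHomogeneousComponent (w s) e (D g) = D (weightedHomogeneousComponent (w s) e g) := by
  classical
  have hfin := weightedHomogeneousComponent_finsupp (w := w s) g
  set T := hfin.toFinset with hT
  have hdec : g = ∑ d ∈ T, weightedHomogeneousComponent (w s) d g := by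
    rw [← finsum_eq_sum _ hfin, sum_weightedHomogeneousComponent]
  have hterm : ∀ d ∈ T,
      weightedHomogeneousComponent (w s) e (D (weightedHomogeneousComponent (w s) d g))
        = if d = e then D (weightedHomogeneousComponent (w s) d g) else 0 := by
    intro d _
    have hhom := D_homog hx hu (weightedHomogeneousComponent_isWeightedHomogeneous d g)
    split
    · next heq => subst heq; exact hhom.weightedHomogeneousComponent_same
    · next hne => exact hhom.weightedHomogeneousComponent_ne e (fun hc => hne hc.symm)
  calc weightedHomogeneousComponent (w s) e (D g)
      = ∑ d ∈ T, weightedHomogeneousComponent (w s) e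
          (D (weightedHomogeneousComponent (w s) d g)) := by
        conv_lhs => rw [hdec]
        rw [map_sum, map_sum]
    _ = ∑ d ∈ T, if d = e then D (weightedHomogeneousComponent (w s) d g) else 0 :=
        Finset.sum_congr rfl hterm
    _ = if e ∈ T then D (weightedHomogeneousComponent (w s) e g) else 0 :=
        Finset.sum_ite_eq' T e _
    _ = D (weightedHomogeneousComponent (w s) e g) := by
        split
        · rfl
        · next hne =>
            have : weightedHomogeneousComponent (w s) e g = 0 := by
              by_contra hc
              exact hne (hfin.mem_toFinset.2 hc)
            rw [this, map_zero]

include hx hu in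
lemma comp_iterD (e n : ℕ) (g : DiffPoly K s) :
    weightedHomogeneousComponent (w s) e ((⇑D)^[n] g)
      = (⇑D)^[n] (weightedHomogeneousComponent (w s) e g) := by
  induction n generalizing g with
  | zero => rfl
  | succ n ih =>
      rw [Function.iterate_succ_apply, Function.iterate_succ_apply, ih, comp_D hx hu]

lemma comp_pderiv (e : ℕ) (p : Fin s × ℕ) (g : DiffPoly K s) :
    pderiv (some p) (weightedHomogeneousComponent (w s) (e + 1) g)
      = weightedHomogeneousComponent (w s) e (pderiv (some p) g) := by
  classical
  conv_lhs => rw [g.as_sum]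
  conv_rhs => rw [g.as_sum]
  rw [map_sum, map_sum, map_sum, map_sum]
  refine Finset.sum_congr rfl fun m _ => ?_
  have hmono : (monomial m (coeff m g)).IsWeightedHomogeneous (w s) (Finsupp.weight (w s) m) :=
    isWeightedHomogeneous_monomial _ _ _ rfl
  by_cases hwm : Finsupp.weight (w s) m = e + 1
  · rw [hwm] at hmono
    rw [hmono.weightedHomogeneousComponent_same, pderiv_monomial]
    by_cases h0 : m (some p) = 0
    · rw [h0]
      simp only [Nat.cast_zero, mul_zero, monomial_zero, map_zero]
    · have h2 := weight_sub_single (s := s) (i := some p) h0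
      have hww : w s (some p) = 1 := rfl
      rw [hww, hwm] at h2
      have : (monomial (m - Finsupp.single (some p) 1)
          (coeff m g * (m (some p) : K))).IsWeightedHomogeneous (w s) e :=
        isWeightedHomogeneous_monomial _ _ _ (by omega)
      rw [this.weightedHomogeneousComponent_same]
  · rw [hmono.weightedHomogeneousComponent_ne (e + 1) (fun hc => hwm hc.symm), map_zero,
      pderiv_monomial]
    by_cases h0 : m (some p) = 0
    · rw [h0]
      simp only [Nat.cast_zero, mul_zero, monomial_zero, map_zero]
    · have h2 := weight_sub_single (s := s) (i := some p) h0
      have hww : w s (some p) = 1 := rfl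
      rw [hww] at h2
      have : (monomial (m - Finsupp.single (some p) 1)
          (coeff m g * (m (some p) : K))).IsWeightedHomogeneous (w s)
            (Finsupp.weight (w s) (m - Finsupp.single (some p) 1)) :=
        isWeightedHomogeneous_monomial _ _ _ rfl
      rw [this.weightedHomogeneousComponent_ne e (by omega)]

lemma bnd_component {N : ℕ} {f : DiffPoly K s} (hN : Bnd N f) (d : ℕ) :
    Bnd N (weightedHomogeneousComponent (w s) d f) := by
  classical
  intro k j hj hmem
  apply hN k j hj
  rw [mem_vars] at hmem ⊢
  obtain ⟨m, hm, him⟩ := hmem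
  refine ⟨m, ?_, him⟩
  rw [mem_support_iff, coeff_weightedHomogeneousComponent] at hm
  rw [mem_support_iff]
  intro hc
  exact hm (by rw [hc, ite_self])

lemma neg_one_pow_mul (j : ℕ) (z : DiffPoly K s) :
    (-1 : DiffPoly K s) ^ j * z = ((-1 : K) ^ j) • z := by
  rw [smul_eq_C_mul, map_pow, map_neg, map_one]

include hx hu in
lemma varDeriv_component (e : ℕ) (f : DiffPoly K s) (k : Fin s) :
    varDeriv D (weightedHomogeneousComponent (w s) (e + 1) f) k
      = weightedHomogeneousComponent (w s) e (varDeriv D f k) := by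
  obtain ⟨N, hN⟩ := exists_bnd f
  rw [varDeriv_eq_sum D (bnd_component hN (e + 1)) k, varDeriv_eq_sum D hN k, map_sum]
  refine Finset.sum_congr rfl fun j _ => ?_
  rw [neg_one_pow_mul, neg_one_pow_mul, map_smul, comp_iterD hx hu, comp_pderiv]

include hx hu in
lemma homog_zero_integrable {φ : DiffPoly K s} (h : φ.IsWeightedHomogeneous (w s) 0) :
    ∃ g : DiffPoly K s, φ = D g := by
  classical
  have hmono : ∀ m ∈ φ.support, m = Finsupp.single (none : Option (Fin s × ℕ)) (m none) := by
    intro m hm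
    have hw0 : Finsupp.weight (w s) m = 0 := h (mem_support_iff.1 hm)
    rw [Finsupp.weight_apply, Finsupp.sum] at hw0
    ext i
    match i with
    | none => rw [Finsupp.single_eq_same]
    | some p =>
        rw [Finsupp.single_eq_of_ne (by simp)]
        by_contra hc
        have hmem : (some p : Option (Fin s × ℕ)) ∈ m.support := Finsupp.mem_support_iff.2 hc
        have := (Finset.sum_eq_zero_iff).1 hw0 _ hmem
        have hws : w s (some p) = 1 := rfl
        rw [hws, smul_eq_mul, mul_one] at this
        exact hc this
  refine ⟨∑ m ∈ φ.support,
    (coeff m φ * ((m none : K) + 1)⁻¹) • (X none : DiffPoly K s) ^ (m none + 1), ?_⟩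
  rw [map_sum]
  conv_lhs => rw [φ.as_sum]
  refine Finset.sum_congr rfl fun m hm => ?_
  set n := m none with hn
  set c := coeff m φ with hc
  have hDpow : D ((X none : DiffPoly K s) ^ (n + 1)) = (n + 1) • (X none : DiffPoly K s) ^ n := by
    rw [Derivation.leibniz_pow, hx, Nat.add_sub_cancel, smul_eq_mul, mul_one]
  rw [Derivation.map_smul, hDpow]
  have hcast : ((n : K) + 1) ≠ 0 := by
    exact_mod_cast Nat.cast_add_one_ne_zero (R := K) n
  have : (c * ((n : K) + 1)⁻¹) • ((n + 1) • (X none : DiffPoly K s) ^ n)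
      = c • (X none : DiffPoly K s) ^ n := by
    rw [← Nat.cast_smul_eq_nsmul K, smul_smul]
    push_cast
    rw [mul_assoc, inv_mul_cancel₀ hcast, mul_one]
  rw [this]
  conv_lhs => rw [hmono m hm]
  rw [X_pow_eq_monomial, smul_monomial, smul_eq_mul, mul_one]

include hx hu in
lemma homog_pos_integrable {φ : DiffPoly K s} {e : ℕ}
    (h : φ.IsWeightedHomogeneous (w s) (e + 1)) (hE : ∀ k, varDeriv D φ k = 0) :
    ∃ g : DiffPoly K s, φ = D g := by
  obtain ⟨N, hN⟩ := exists_bnd φ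
  obtain ⟨G, hG⟩ := master hx hu hN hE
  rw [Rg_homog h] at hG
  refine ⟨((e + 1 : K))⁻¹ • G, ?_⟩
  have hcast : ((e : K) + 1) ≠ 0 := Nat.cast_add_one_ne_zero (R := K) e
  calc φ = ((e + 1 : K))⁻¹ • ((e + 1 : K) • φ) := by
        rw [smul_smul, inv_mul_cancel₀ hcast, one_smul]
    _ = ((e + 1 : K))⁻¹ • ((e + 1 : ℕ) • φ) := by
        rw [show ((e : K) + 1) = ((e + 1 : ℕ) : K) by push_cast; ring, Nat.cast_smul_eq_nsmul]
    _ = ((e + 1 : K))⁻¹ • D G := by rw [hG]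
    _ = D (((e + 1 : K))⁻¹ • G) := (Derivation.map_smul D _ _).symm

end Stmt10Aux

open MvPolynomial Stmt10Aux in
/-- Let `K` be a field of characteristic zero, `s ≥ 1`, `A` the algebra
of differential polynomials with total derivative `D`. For `f ∈ A`, the variational
derivatives `δf/δu^k` vanish for all `k` if and only if `f = D(g)` for some `g ∈ A`. -/
theorem stmt_10 {K : Type*} [Field K] [CharZero K] (s : ℕ) (hs : 1 ≤ s)
    (D : Derivation K (DiffPoly K s) (DiffPoly K s))
    (hx : D (MvPolynomial.X none) = 1)
    (hu : ∀ (k : Fin s) (j : ℕ),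
      D (MvPolynomial.X (some (k, j))) = MvPolynomial.X (some (k, j + 1)))
    (f : DiffPoly K s) :
    (∀ k : Fin s, varDeriv D f k = 0) ↔ ∃ g : DiffPoly K s, f = D g := by
  classical
  constructor
  · intro hE
    have hfin := weightedHomogeneousComponent_finsupp (w := Stmt10Aux.w s) f
    have hdec : f = ∑ d ∈ hfin.toFinset,
        weightedHomogeneousComponent (Stmt10Aux.w s) d f := by
      rw [← finsum_eq_sum _ hfin, sum_weightedHomogeneousComponent]
    have hex : ∀ d : ℕ, ∃ g, weightedHomogeneousComponent (Stmt10Aux.w s) d f = D g := by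
      intro d
      match d with
      | 0 => exact homog_zero_integrable hx hu
              (weightedHomogeneousComponent_isWeightedHomogeneous 0 f)
      | e + 1 =>
          refine homog_pos_integrable hx hu
            (weightedHomogeneousComponent_isWeightedHomogeneous (e + 1) f) fun k => ?_
          rw [varDeriv_component hx hu, hE k, map_zero]
    choose G hG using hex
    refine ⟨∑ d ∈ hfin.toFinset, G d, ?_⟩
    rw [map_sum]
    conv_lhs => rw [hdec]
    exact Finset.sum_congr rfl fun d _ => hG d
  · rintro ⟨g, rfl⟩ k
    exact varDeriv_D_eq_zero hx hu g k
end

section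
/- Let K be a field of characteristic zero, s ≥ 1, and let A be the algebra of differential polynomials in x and u^k_j with total derivative D. Let Q, γ ∈ A^s satisfy γ'(Q) = γ'^†(Q) and γ'(Q) + Q'^†(γ) = 0 (i.e., the Lie derivative of the covector γ along Q vanishes and the required symmetry holds). Then Q·γ lies in the image of D, i.e., Q·γ = D(g) for some g ∈ A. -/
/-- The directional derivative: `(γ'(P))_l = Σ_{j≥0} Σ_k (∂γ_l/∂u^k_j)·D^j(P_k)`. -/
noncomputable def dirDeriv {K : Type*} [Field K] {s : ℕ}
    (D : Derivation K (DiffPoly K s) (DiffPoly K s))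
    (γ P : Fin s → DiffPoly K s) (l : Fin s) : DiffPoly K s :=
  ∑ᶠ j : ℕ, ∑ k : Fin s,
    MvPolynomial.pderiv (some (k, j)) (γ l) * (⇑D)^[j] (P k)

/-- The formal-adjoint action:
`(γ'^†(P))_k = Σ_{j≥0} Σ_l (−1)^j D^j((∂γ_l/∂u^k_j)·P_l)`. -/
noncomputable def adjDeriv {K : Type*} [Field K] {s : ℕ}
    (D : Derivation K (DiffPoly K s) (DiffPoly K s))
    (γ P : Fin s → DiffPoly K s) (k : Fin s) : DiffPoly K s :=
  ∑ᶠ j : ℕ, ∑ l : Fin s, (-1 : DiffPoly K s) ^ j *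
    (⇑D)^[j] (MvPolynomial.pderiv (some (k, j)) (γ l) * P l)

/-!
By the product rule for variational derivatives, `δ(Q·γ)/δu^k = Q'^†(γ)_k + γ'^†(Q)_k`, and the
two hypotheses say exactly that this vanishes. It remains to see that a differential polynomial
`f` with all `δf/δu^k = 0` is a total derivative. Integrating by parts,
`u^k_j ∂f/∂u^k_j ≡ (-1)^j u^k_0 D^j(∂f/∂u^k_j)` modulo `im D`, so the Euler operator
`Σ u^k_j ∂f/∂u^k_j` maps `f` to `Σ_k u^k_0 δf/δu^k = 0` modulo `im D`. Since `D` preserves the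
degree in the `u^k_j`, so does this operator, and on the component `f_n` of degree `n` it is
multiplication by `n`; hence `f_n ∈ im D` for `n ≠ 0`. The component of degree `0` is a
polynomial in `x`, integrable in characteristic zero.
-/

open MvPolynomial

theorem finsum_eq_sum_range {M : Type*} [AddCommMonoid M] {f : ℕ → M} {N : ℕ}
    (hf : ∀ j, N ≤ j → f j = 0) : ∑ᶠ j, f j = ∑ j ∈ Finset.range N, f j :=
  finsum_eq_sum_of_support_subset f fun j hj => by
    by_contra hN
    exact hj (hf j (by simpa using hN))

namespace Derivation

variable {R A : Type*} [CommRing R] [CommRing A] [Algebra R A]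

theorem iterate_mul_sub_mem_range (D : Derivation R A A) (a : A) (j : ℕ) (b : A) :
    (⇑D)^[j] a * b - (-1) ^ j * (a * (⇑D)^[j] b) ∈ LinearMap.range D.toLinearMap := by
  induction j generalizing b with
  | zero => simp
  | succ j ih =>
    have hD : D ((⇑D)^[j] a * b) ∈ LinearMap.range D.toLinearMap := ⟨_, rfl⟩
    convert sub_mem hD (ih (D b)) using 1
    rw [Function.iterate_succ_apply', Function.iterate_succ_apply, D.leibniz, smul_eq_mul,
      smul_eq_mul]
    ring

theorem pow_mem_range_of_apply_eq_one {K : Type*} [Field K] [CharZero K] [Algebra K A]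
    (D : Derivation K A A) {a : A} (ha : D a = 1) (n : ℕ) :
    a ^ n ∈ LinearMap.range D.toLinearMap := by
  refine ⟨((n + 1 : ℕ) : K)⁻¹ • a ^ (n + 1), ?_⟩
  rw [LinearMap.map_smul, Derivation.coeFn_coe, D.leibniz_pow, ha, smul_eq_mul, mul_one,
    Nat.add_sub_cancel, ← Nat.cast_smul_eq_nsmul K, smul_smul,
    inv_mul_cancel₀ (Nat.cast_ne_zero.2 n.succ_ne_zero), one_smul]

end Derivation

namespace MvPolynomial

variable {R σ M : Type*} [CommSemiring R] [AddCommMonoid M] {w : σ → M}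

theorem IsWeightedHomogeneous.map_of_monomial {L : MvPolynomial σ R →ₗ[R] MvPolynomial σ R}
    (hL : ∀ m r, (L (monomial m r)).IsWeightedHomogeneous w (m.weight w))
    {φ : MvPolynomial σ R} {n : M} (h : φ.IsWeightedHomogeneous w n) :
    (L φ).IsWeightedHomogeneous w n := by
  rw [φ.as_sum, map_sum, ← mem_weightedHomogeneousSubmodule]
  refine Submodule.sum_mem _ fun m hm => ?_
  rw [mem_weightedHomogeneousSubmodule, ← h (mem_support_iff.1 hm)]
  exact hL m _

theorem IsWeightedHomogeneous.derivation
    {D : Derivation R (MvPolynomial σ R) (MvPolynomial σ R)}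
    (hD : ∀ i, (D (X i)).IsWeightedHomogeneous w (w i))
    {φ : MvPolynomial σ R} {n : M} (h : φ.IsWeightedHomogeneous w n) :
    (D φ).IsWeightedHomogeneous w n := by
  refine h.map_of_monomial (L := D.toLinearMap) fun m r => ?_
  have hmk : D = mkDerivation R fun i => D (X i) :=
    derivation_ext fun i => by rw [mkDerivation_X]
  rw [Derivation.coeFn_coe, hmk, mkDerivation_monomial, Finsupp.sum,
    ← mem_weightedHomogeneousSubmodule]
  refine Submodule.smul_mem _ _ (Submodule.sum_mem _ fun i hi => ?_)
  rw [mem_weightedHomogeneousSubmodule, smul_eq_mul,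
    ← Finsupp.weight_sub_single_add (Finsupp.mem_support_iff.1 hi)]
  exact (isWeightedHomogeneous_monomial _ _ _ rfl).mul (hD i)

theorem IsWeightedHomogeneous.X_mul_pderiv (i : σ) {φ : MvPolynomial σ R} {n : M}
    (h : φ.IsWeightedHomogeneous w n) : (X i * pderiv i φ).IsWeightedHomogeneous w n :=
  h.map_of_monomial (L := LinearMap.mulLeft R (X i) ∘ₗ (pderiv i).toLinearMap) fun m r => by
    rw [LinearMap.comp_apply, LinearMap.mulLeft_apply, Derivation.coeFn_coe,
      X_mul_pderiv_monomial, smul_monomial]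
    exact isWeightedHomogeneous_monomial _ _ _ rfl

theorem weightedHomogeneousComponent_map {L : MvPolynomial σ R →ₗ[R] MvPolynomial σ R}
    (hL : ∀ n φ, IsWeightedHomogeneous w φ n → (L φ).IsWeightedHomogeneous w n)
    (n : M) (φ : MvPolynomial σ R) :
    weightedHomogeneousComponent w n (L φ) = L (weightedHomogeneousComponent w n φ) := by
  classical
  have hfin := weightedHomogeneousComponent_finsupp (w := w) φ
  conv_lhs => rw [← sum_weightedHomogeneousComponent w φ, finsum_eq_sum _ hfin]
  simp_rw [map_sum, weightedHomogeneousComponent_of_mem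
    (hL _ _ (weightedHomogeneousComponent_isWeightedHomogeneous _ _)), Finset.sum_ite_eq]
  split_ifs with hn
  · rfl
  · have hzero : weightedHomogeneousComponent w n φ = 0 :=
      not_not.1 fun h => hn (hfin.mem_toFinset.2 h)
    rw [hzero, map_zero]

theorem IsWeightedHomogeneous.sum_weight_X_mul_pderiv_of_vars_subset {w : σ → ℕ}
    {φ : MvPolynomial σ R} {n : ℕ} {S : Finset σ} (h : φ.IsWeightedHomogeneous w n)
    (hS : φ.vars ⊆ S) : ∑ i ∈ S, w i • (X i * pderiv i φ) = n • φ := by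
  classical
  conv_lhs => rw [φ.as_sum]
  conv_rhs => rw [φ.as_sum, Finset.smul_sum]
  simp_rw [map_sum, Finset.mul_sum, X_mul_pderiv_monomial, Finset.smul_sum, smul_smul]
  rw [Finset.sum_comm]
  refine Finset.sum_congr rfl fun m hm => ?_
  have hmS : m.support ⊆ S := fun i hi => hS ((mem_vars_iff_mem_support i).2 ⟨m, hm, hi⟩)
  rw [← Finset.sum_smul, ← h (mem_support_iff.1 hm), Finsupp.weight_apply,
    Finsupp.sum_of_support_subset m hmS (fun i c => c • w i) fun _ _ => zero_smul _ _]
  simp_rw [smul_eq_mul, mul_comm]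

theorem vars_weightedHomogeneousComponent_subset (n : M) (φ : MvPolynomial σ R) :
    (weightedHomogeneousComponent w n φ).vars ⊆ φ.vars := by
  classical
  intro i hi
  obtain ⟨m, hm, hi⟩ := (mem_vars_iff_mem_support i).1 hi
  rw [support_weightedHomogeneousComponent, Finset.mem_filter] at hm
  exact (mem_vars_iff_mem_support i).2 ⟨m, hm.1, hi⟩

theorem weightedHomogeneousComponent_mem_range {R : Type*} [Field R] [CharZero R] {w : σ → ℕ}
    {L : MvPolynomial σ R →ₗ[R] MvPolynomial σ R}
    (hL : ∀ n φ, IsWeightedHomogeneous w φ n → (L φ).IsWeightedHomogeneous w n)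
    {S : Finset σ} {f : MvPolynomial σ R} (hS : f.vars ⊆ S)
    (hf : ∑ i ∈ S, w i • (X i * pderiv i f) ∈ LinearMap.range L) {n : ℕ} (hn : n ≠ 0) :
    weightedHomogeneousComponent w n f ∈ LinearMap.range L := by
  obtain ⟨H, hH⟩ := hf
  let E : MvPolynomial σ R →ₗ[R] MvPolynomial σ R :=
    ∑ i ∈ S, w i • (LinearMap.mulLeft R (X i) ∘ₗ (pderiv i).toLinearMap)
  have hE : ∀ φ, E φ = ∑ i ∈ S, w i • (X i * pderiv i φ) := fun φ => by simp [E]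
  have hE_hom : ∀ n φ, IsWeightedHomogeneous w φ n → (E φ).IsWeightedHomogeneous w n := by
    intro n φ hφ
    rw [hE, ← mem_weightedHomogeneousSubmodule]
    exact Submodule.sum_mem _ fun i _ => Submodule.smul_of_tower_mem _ _ (hφ.X_mul_pderiv i)
  have key : (n : R) • weightedHomogeneousComponent w n f =
      L (weightedHomogeneousComponent w n H) := by
    rw [Nat.cast_smul_eq_nsmul, ← (weightedHomogeneousComponent_isWeightedHomogeneous n f
      ).sum_weight_X_mul_pderiv_of_vars_subset
      ((vars_weightedHomogeneousComponent_subset n f).trans hS), ← hE,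
      ← weightedHomogeneousComponent_map hE_hom, hE, ← hH, weightedHomogeneousComponent_map hL]
  rw [← inv_smul_smul₀ (Nat.cast_ne_zero.2 hn : (n : R) ≠ 0)
    (weightedHomogeneousComponent w n f), key]
  exact Submodule.smul_mem _ _ (LinearMap.mem_range_self L _)

end MvPolynomial

namespace DiffPoly

variable {K : Type*} [Field K] {s : ℕ}

def uWeight (s : ℕ) : Option (Fin s × ℕ) → ℕ := fun i => i.elim 0 fun _ => 1

def varsUpTo (s N : ℕ) : Finset (Option (Fin s × ℕ)) :=
  insert none ((Finset.univ ×ˢ Finset.range N).map Function.Embedding.some)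

theorem sum_varsUpTo {M : Type*} [AddCommMonoid M] (N : ℕ) (g : Option (Fin s × ℕ) → M) :
    ∑ i ∈ varsUpTo s N, g i = g none + ∑ k, ∑ j ∈ Finset.range N, g (some (k, j)) := by
  rw [varsUpTo, Finset.sum_insert (by simp), Finset.sum_map, Finset.sum_product]
  rfl

theorem exists_vars_subset_varsUpTo {ι : Type*} [Fintype ι] (p : ι → DiffPoly K s) :
    ∃ N, ∀ i, (p i).vars ⊆ varsUpTo s N := by
  let ord : Option (Fin s × ℕ) → ℕ := fun v => v.elim 0 fun kj => kj.2 + 1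
  refine ⟨Finset.univ.sup fun i => (p i).vars.sup ord, fun i v hv => ?_⟩
  rcases v with _ | ⟨k, j⟩
  · simp [varsUpTo]
  · have hj : ord (some (k, j)) ≤ _ :=
      (Finset.le_sup hv).trans (Finset.le_sup (f := fun i => (p i).vars.sup ord)
        (Finset.mem_univ i))
    simp only [varsUpTo, Finset.mem_insert, Finset.mem_map, Finset.mem_product,
      Finset.mem_range]
    exact Or.inr ⟨(k, j), ⟨Finset.mem_univ k, hj⟩, rfl⟩

theorem pderiv_eq_zero_of_vars_subset {p : DiffPoly K s} {N : ℕ} (h : p.vars ⊆ varsUpTo s N)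
    (k : Fin s) {j : ℕ} (hj : N ≤ j) : pderiv (some (k, j)) p = 0 :=
  pderiv_eq_zero_of_notMem_vars fun hv => by
    have := h hv
    simp [varsUpTo] at this
    omega

noncomputable def varDeriv (D : Derivation K (DiffPoly K s) (DiffPoly K s)) (k : Fin s)
    (f : DiffPoly K s) : DiffPoly K s :=
  ∑ᶠ j : ℕ, (-1 : DiffPoly K s) ^ j * (⇑D)^[j] (pderiv (some (k, j)) f)

variable (D : Derivation K (DiffPoly K s) (DiffPoly K s))

theorem varDeriv_eq_sum {f : DiffPoly K s} {N : ℕ} (h : f.vars ⊆ varsUpTo s N) (k : Fin s) :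
    varDeriv D k f =
      ∑ j ∈ Finset.range N, (-1 : DiffPoly K s) ^ j * (⇑D)^[j] (pderiv (some (k, j)) f) :=
  finsum_eq_sum_range fun j hj => by
    rw [pderiv_eq_zero_of_vars_subset h k hj, iterate_map_zero, mul_zero]

theorem adjDeriv_eq_sum {γ : Fin s → DiffPoly K s} {N : ℕ}
    (h : ∀ l, (γ l).vars ⊆ varsUpTo s N) (P : Fin s → DiffPoly K s) (k : Fin s) :
    adjDeriv D γ P k = ∑ j ∈ Finset.range N, ∑ l, (-1 : DiffPoly K s) ^ j *
      (⇑D)^[j] (pderiv (some (k, j)) (γ l) * P l) :=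
  finsum_eq_sum_range fun j hj => Finset.sum_eq_zero fun l _ => by
    rw [pderiv_eq_zero_of_vars_subset (h l) k hj, zero_mul, iterate_map_zero, mul_zero]

theorem varDeriv_sum_mul (Q γ : Fin s → DiffPoly K s) (k : Fin s) :
    varDeriv D k (∑ l, Q l * γ l) = adjDeriv D Q γ k + adjDeriv D γ Q k := by
  classical
  obtain ⟨N, hN⟩ := exists_vars_subset_varsUpTo (Sum.elim Q γ)
  have hQ : ∀ l, (Q l).vars ⊆ varsUpTo s N := fun l => hN (.inl l)
  have hγ : ∀ l, (γ l).vars ⊆ varsUpTo s N := fun l => hN (.inr l)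
  have hQγ : (∑ l, Q l * γ l).vars ⊆ varsUpTo s N :=
    (vars_sum_subset _ _).trans <| Finset.biUnion_subset.2 fun l _ =>
      (vars_mul _ _).trans (Finset.union_subset (hQ l) (hγ l))
  rw [varDeriv_eq_sum D hQγ, adjDeriv_eq_sum D hQ, adjDeriv_eq_sum D hγ,
    ← Finset.sum_add_distrib]
  refine Finset.sum_congr rfl fun j _ => ?_
  have hiter : ∀ a : DiffPoly K s, (⇑D)^[j] a = (D.toLinearMap ^ j) a := fun a =>
    (Module.End.pow_apply _ j a).symm
  simp only [hiter, map_sum, Derivation.leibniz, smul_eq_mul, map_add, Finset.mul_sum,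
    mul_add, Finset.sum_add_distrib]
  rw [add_comm]
  simp only [mul_comm (γ _) (pderiv _ (Q _)), mul_comm (Q _) (pderiv _ (γ _))]

theorem iterate_apply_X (hu : ∀ (k : Fin s) (j : ℕ), D (X (some (k, j))) = X (some (k, j + 1)))
    (k : Fin s) (j : ℕ) : (⇑D)^[j] (X (some (k, 0))) = X (some (k, j)) := by
  induction j with
  | zero => rfl
  | succ j ih => rw [Function.iterate_succ_apply', ih, hu]

theorem sum_uWeight_X_mul_pderiv_sub_mem_range
    (hu : ∀ (k : Fin s) (j : ℕ), D (X (some (k, j))) = X (some (k, j + 1)))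
    {f : DiffPoly K s} {N : ℕ} (h : f.vars ⊆ varsUpTo s N) :
    ∑ i ∈ varsUpTo s N, uWeight s i • (X i * pderiv i f) -
      ∑ k, X (some (k, 0)) * varDeriv D k f ∈ LinearMap.range D.toLinearMap := by
  simp only [sum_varsUpTo, uWeight, Option.elim, zero_smul, one_smul, zero_add,
    varDeriv_eq_sum D h, Finset.mul_sum, ← Finset.sum_sub_distrib]
  refine Submodule.sum_mem _ fun k _ => Submodule.sum_mem _ fun j _ => ?_
  rw [← iterate_apply_X D hu k j, mul_left_comm]
  exact D.iterate_mul_sub_mem_range _ j _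

theorem isWeightedHomogeneous_apply (hx : D (X none) = 1)
    (hu : ∀ (k : Fin s) (j : ℕ), D (X (some (k, j))) = X (some (k, j + 1)))
    {p : DiffPoly K s} {n : ℕ} (hp : p.IsWeightedHomogeneous (uWeight s) n) :
    (D p).IsWeightedHomogeneous (uWeight s) n :=
  hp.derivation fun
    | none => by rw [hx]; exact isWeightedHomogeneous_one K _
    | some (k, j) => by rw [hu]; exact isWeightedHomogeneous_X K _ _

variable [CharZero K]

theorem mem_range_of_isWeightedHomogeneous_zero (hx : D (X none) = 1) {p : DiffPoly K s}
    (hp : p.IsWeightedHomogeneous (uWeight s) 0) : p ∈ LinearMap.range D.toLinearMap := by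
  rw [p.as_sum]
  refine Submodule.sum_mem _ fun m hm => ?_
  have hm_single : m = Finsupp.single none (m none) := by
    ext (_ | q)
    · simp
    · have := Finsupp.le_weight (uWeight s) (s := some q) one_ne_zero m
      rw [hp (mem_support_iff.1 hm)] at this
      simp only [Finsupp.single_apply, reduceCtorEq, if_false]
      omega
  rw [hm_single, ← C_mul_X_pow_eq_monomial, C_mul']
  exact Submodule.smul_mem _ _ (D.pow_mem_range_of_apply_eq_one hx _)

theorem mem_range_of_varDeriv_eq_zero (hx : D (X none) = 1)
    (hu : ∀ (k : Fin s) (j : ℕ), D (X (some (k, j))) = X (some (k, j + 1)))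
    {f : DiffPoly K s} (hf : ∀ k, varDeriv D k f = 0) : f ∈ LinearMap.range D.toLinearMap := by
  obtain ⟨N, hN⟩ := exists_vars_subset_varsUpTo fun _ : Unit => f
  have hE := sum_uWeight_X_mul_pderiv_sub_mem_range D hu (hN ())
  simp only [hf, mul_zero, Finset.sum_const_zero, sub_zero] at hE
  rw [← sum_weightedHomogeneousComponent (uWeight s) f,
    finsum_eq_sum _ (weightedHomogeneousComponent_finsupp f)]
  refine Submodule.sum_mem _ fun n _ => ?_
  rcases eq_or_ne n 0 with rfl | hn
  · exact mem_range_of_isWeightedHomogeneous_zero D hx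
      (weightedHomogeneousComponent_isWeightedHomogeneous 0 f)
  · exact weightedHomogeneousComponent_mem_range
      (fun _ _ hp => isWeightedHomogeneous_apply D hx hu hp) (hN ()) hE hn

end DiffPoly

theorem stmt_11_general {K : Type*} [Field K] [CharZero K] (s : ℕ)
    (D : Derivation K (DiffPoly K s) (DiffPoly K s))
    (hx : D (MvPolynomial.X none) = 1)
    (hu : ∀ (k : Fin s) (j : ℕ),
      D (MvPolynomial.X (some (k, j))) = MvPolynomial.X (some (k, j + 1)))
    (Q γ : Fin s → DiffPoly K s)
    (hsym : ∀ i : Fin s, dirDeriv D γ Q i = adjDeriv D γ Q i)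
    (hlie : ∀ i : Fin s, dirDeriv D γ Q i + adjDeriv D Q γ i = 0) :
    ∃ g : DiffPoly K s, (∑ k, Q k * γ k) = D g := by
  have hvar : ∀ k, DiffPoly.varDeriv D k (∑ l, Q l * γ l) = 0 := fun k => by
    rw [DiffPoly.varDeriv_sum_mul, add_comm, ← hsym k, hlie k]
  obtain ⟨g, hg⟩ := DiffPoly.mem_range_of_varDeriv_eq_zero D hx hu hvar
  exact ⟨g, hg.symm⟩

/-- Let `K` be a field of characteristic zero, `s ≥ 1`, `A` the algebra
of differential polynomials with total derivative `D`. Let `Q, γ ∈ A^s` satisfy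
`γ'(Q) = γ'^†(Q)` and `γ'(Q) + Q'^†(γ) = 0` (vanishing of the Lie derivative of the
covector `γ` along `Q` together with the required symmetry). Then `Q·γ` lies in the
image of `D`: `Q·γ = D(g)` for some `g ∈ A`. -/
theorem stmt_11 {K : Type*} [Field K] [CharZero K] (s : ℕ) (hs : 1 ≤ s)
    (D : Derivation K (DiffPoly K s) (DiffPoly K s))
    (hx : D (MvPolynomial.X none) = 1)
    (hu : ∀ (k : Fin s) (j : ℕ),
      D (MvPolynomial.X (some (k, j))) = MvPolynomial.X (some (k, j + 1)))
    (Q γ : Fin s → DiffPoly K s)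
    (hsym : ∀ i : Fin s, dirDeriv D γ Q i = adjDeriv D γ Q i)
    (hlie : ∀ i : Fin s, dirDeriv D γ Q i + adjDeriv D Q γ i = 0) :
    ∃ g : DiffPoly K s, (∑ k, Q k * γ k) = D g :=
  stmt_11_general s D hx hu Q γ hsym hlie
end
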